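/- Let C ⊆ F^n be a constacyclic code of dimension k with k | n, generated by g(x) | x^n - a of degree n - k. If C is spanned by a basis of k codewords with pairwise disjoint supports, then there exists a codeword c ∈ C with Hamming weight exactly n/k. -/

import Mathlib

open Polynomial

noncomputable section

def shiftBy {F : Type*} [Field F] {n : ℕ} (a : F) (c : Fin n → F) : Fin n → F :=
  fun i => if _h : (i : ℕ) = 0 then a * c ⟨n - 1, by have := i.isLt; omega⟩
           else c ⟨(i : ℕ) - 1, by have := i.isLt; omega⟩

def codeOf {F : Type*} [Field F] (n : ℕ) (a : F) (g : F[X]) : Set (Fin n → F) :=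
  {v | ∃ h : F[X], ∀ i : Fin n, v i = ((g * h) %ₘ (X ^ n - C a)).coeff i}

def schurPow {F : Type*} [Field F] {n : ℕ} (W : Submodule F (Fin n → F)) : ℕ → Submodule F (Fin n → F)
  | 0 => W
  | 1 => W
  | (i+2) => Submodule.span F {x | ∃ c ∈ W, ∃ d ∈ schurPow W (i+1), x = c * d}

def wt {F : Type*} [Field F] {n : ℕ} (c : Fin n → F) : ℕ := {i | c i ≠ 0}.ncard

def dminW {F : Type*} [Field F] {n : ℕ} (W : Submodule F (Fin n → F)) : ℕ :=
  sInf {w | ∃ c ∈ W, c ≠ 0 ∧ wt c = w}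

def toPoly {F : Type*} [Field F] {n : ℕ} (c : Fin n → F) : F[X] :=
  ∑ i : Fin n, Polynomial.C (c i) * X ^ (i : ℕ)

/-!
Index positions by `ℤ/n`. The supports of the basis vectors are pairwise disjoint nonempty blocks,
and the support of every codeword is a union of blocks. The constacyclic shift maps the code to
itself and, as `a ≠ 0`, translates supports by `1`; hence every translate of a block is a union of
blocks. Comparing the translate by `x` with the translate by `-x` shows that a translate of a block
which meets another block equals it. So all blocks are translates of a single one: they cover `ℤ/n`
and have the same size, which must then be `n / k`.
-/

open Finset Function

theorem subset_biUnion_of_mem_of_pairwise_disjoint {α ι : Type*} [DecidableEq α]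
    {S : ι → Finset α} (hS : Pairwise (Disjoint on S)) {T : Finset ι} {m : α} {j : ι} (hmT : m ∈ T.biUnion S) (hmj : m ∈ S j) :
    S j ⊆ T.biUnion S := by
  obtain ⟨l, hlT, hml⟩ := mem_biUnion.mp hmT
  obtain rfl : l = j := by
    by_contra hlj
    exact disjoint_left.mp (hS hlj) hml hmj
  exact subset_biUnion_of_mem S hlT

section TranslatedBlocks

variable {G ι : Type*} [AddGroup G] [DecidableEq G] {S : ι → Finset G}

theorem image_add_right_eq_of_mem (hS : Pairwise (Disjoint on S))
    (hblock : ∀ i x, ∃ T : Finset ι, (S i).image (· + x) = T.biUnion S)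
    {i j : ι} {x m : G} (hmi : m ∈ (S i).image (· + x)) (hmj : m ∈ S j) :
    (S i).image (· + x) = S j := by
  obtain ⟨T, hT⟩ := hblock i x
  obtain ⟨T', hT'⟩ := hblock j (-x)
  have hmx : m + -x ∈ S i := by
    obtain ⟨y, hy, rfl⟩ := mem_image.mp hmi
    simpa using hy
  have hSi : S i ⊆ (S j).image (· + -x) :=
    hT' ▸ subset_biUnion_of_mem_of_pairwise_disjoint hS (hT' ▸ mem_image_of_mem _ hmj) hmx
  refine Subset.antisymm ?_ (hT ▸ subset_biUnion_of_mem_of_pairwise_disjoint hS (hT ▸ hmi) hmj)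
  intro y hy
  obtain ⟨z, hz, rfl⟩ := mem_image.mp hy
  obtain ⟨w, hw, rfl⟩ := mem_image.mp (hSi hz)
  simpa using hw

theorem card_mul_card_eq_of_image_add_right_eq_biUnion [Fintype G] [Fintype ι]
    (hS : Pairwise (Disjoint on S)) (hne : ∀ i, (S i).Nonempty)
    (hblock : ∀ i x, ∃ T : Finset ι, (S i).image (· + x) = T.biUnion S) (i₀ : ι) :
    Fintype.card ι * (S i₀).card = Fintype.card G := by
  obtain ⟨m₀, hm₀⟩ := hne i₀
  have hmem : ∀ m, m ∈ (S i₀).image (· + (-m₀ + m)) := fun m =>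
    mem_image.mpr ⟨m₀, hm₀, by simp [← add_assoc]⟩
  have hcover : univ.biUnion S = univ := by
    refine eq_univ_of_forall fun m => ?_
    obtain ⟨T, hT⟩ := hblock i₀ (-m₀ + m)
    have hm := hT ▸ hmem m
    exact biUnion_subset_biUnion_of_subset_left S (subset_univ T) hm
  have hcard : ∀ j, (S j).card = (S i₀).card := fun j => by
    obtain ⟨m, hm⟩ := hne j
    rw [← image_add_right_eq_of_mem hS hblock (hmem m) hm,
      card_image_of_injective _ (add_left_injective _)]
  calc Fintype.card ι * (S i₀).card = ∑ j, (S j).card := by simp [hcard]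
    _ = (univ.biUnion S).card := (card_biUnion fun i _ j _ hij => hS hij).symm
    _ = Fintype.card G := by rw [hcover, card_univ]

end TranslatedBlocks

section Supports

variable {M R α ι : Type*} [Fintype α]

open Classical in
def supportFinset [Zero M] (v : α → M) : Finset α := {m | v m ≠ 0}

theorem mem_supportFinset [Zero M] {v : α → M} {m : α} : m ∈ supportFinset v ↔ v m ≠ 0 := by
  simp [supportFinset]

theorem supportFinset_nonempty [Zero M] {v : α → M} (hv : v ≠ 0) : (supportFinset v).Nonempty := by
  obtain ⟨m, hm⟩ := Function.ne_iff.mp hv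
  exact ⟨m, mem_supportFinset.mpr hm⟩

theorem wt_eq_card_supportFinset {F : Type*} [Field F] {n : ℕ} (v : Fin n → F) : wt v = (supportFinset v).card := by
  rw [wt, ← Set.ncard_coe_finset]
  congr 1
  ext m
  simp [supportFinset]

theorem pairwise_disjoint_supportFinset [Zero M] {b : ι → α → M}
    (hdisj : ∀ i j, i ≠ j → ∀ m, b i m = 0 ∨ b j m = 0) :
    Pairwise (Disjoint on fun i => supportFinset (b i)) := fun i j hij =>
  disjoint_left.mpr fun m hi hj =>
    (hdisj i j hij m).elim (mem_supportFinset.mp hi) (mem_supportFinset.mp hj)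

theorem exists_supportFinset_eq_biUnion_of_mem_span [Semiring R] [NoZeroDivisors R]
    [DecidableEq α] [Fintype ι] {b : ι → α → R}
    (hdisj : ∀ i j, i ≠ j → ∀ m, b i m = 0 ∨ b j m = 0) {v : α → R}
    (hv : v ∈ Submodule.span R (Set.range b)) :
    ∃ T : Finset ι, supportFinset v = T.biUnion fun i => supportFinset (b i) := by
  classical
  obtain ⟨c, rfl⟩ := (Submodule.mem_span_range_iff_exists_fun R).mp hv
  refine ⟨univ.filter fun i => c i ≠ 0, ?_⟩
  ext m
  simp only [mem_supportFinset, mem_biUnion, mem_filter, mem_univ, true_and, Finset.sum_apply,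
    Pi.smul_apply, smul_eq_mul]
  by_cases hm : ∃ j, b j m ≠ 0
  · obtain ⟨j, hj⟩ := hm
    have hsum : ∑ i, c i * b i m = c j * b j m :=
      sum_eq_single j (fun i _ hij => by
        rcases hdisj i j hij m with h | h
        · rw [h, mul_zero]
        · exact absurd h hj) (by simp)
    rw [hsum]
    constructor
    · exact fun h => ⟨j, left_ne_zero_of_mul h, hj⟩
    · rintro ⟨i, hci, hi⟩
      obtain rfl : i = j := by
        by_contra hij
        exact (hdisj i j hij m).elim hi hj
      exact mul_ne_zero hci hi
  · push Not at hm
    simp [hm]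

end Supports

section Constacyclic

theorem coeff_X_mul_sub_C_mul_X_pow_sub_C {R : Type*} [CommRing R] {n : ℕ} (hn : 0 < n)
    (p : R[X]) (c a : R) (m : ℕ) :
    (X * p - C c * (X ^ n - C a)).coeff m =
      (if m = 0 then c * a else p.coeff (m - 1)) - if m = n then c else 0 := by
  rcases m with _ | m
  · simp [coeff_X_pow, hn.ne]
  · simp [coeff_X_mul, coeff_X_pow]

theorem X_mul_modByMonic_X_pow_sub_C {R : Type*} [CommRing R] [Nontrivial R] {n : ℕ}
    (hn : 0 < n) (a : R) (p : R[X]) :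
    (X * p) %ₘ (X ^ n - C a) =
      X * (p %ₘ (X ^ n - C a)) - C ((p %ₘ (X ^ n - C a)).coeff (n - 1)) * (X ^ n - C a) := by
  set f := X ^ n - C a
  set r := p %ₘ f
  have hf : f.Monic := monic_X_pow_sub_C a hn.ne'
  have hfdeg : f.degree = n := degree_X_pow_sub_C hn a
  have hr : ∀ j, n ≤ j → r.coeff j = 0 :=
    (degree_lt_iff_coeff_zero r n).mp (hfdeg ▸ degree_modByMonic_lt p hf)
  refine (div_modByMonic_unique (C (r.coeff (n - 1)) + X * (p /ₘ f)) _ hf ⟨?_, ?_⟩).2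
  · linear_combination X * modByMonic_add_div p f
  · rw [hfdeg, degree_lt_iff_coeff_zero]
    intro m hm
    rw [coeff_X_mul_sub_C_mul_X_pow_sub_C hn, if_neg (by omega)]
    rcases hm.eq_or_lt with rfl | hm
    · simp
    · simp [hr (m - 1) (by omega), hm.ne']

variable {F : Type*} [Field F]

theorem shiftBy_mem_codeOf {n : ℕ} (hn : 0 < n) (a : F) (g : F[X]) {v : Fin n → F}
    (hv : v ∈ codeOf n a g) : shiftBy a v ∈ codeOf n a g := by
  obtain ⟨h, hv⟩ := hv
  refine ⟨X * h, fun i => ?_⟩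
  rw [mul_left_comm, X_mul_modByMonic_X_pow_sub_C hn, coeff_X_mul_sub_C_mul_X_pow_sub_C hn,
    if_neg i.isLt.ne, sub_zero, shiftBy]
  split_ifs with hi
  · simp [hv, mul_comm]
  · simp [hv]

theorem shiftBy_add_one_ne_zero_iff {N : ℕ} {a : F} (ha : a ≠ 0) (v : Fin (N + 1) → F)
    (m : Fin (N + 1)) : shiftBy a v (m + 1) ≠ 0 ↔ v m ≠ 0 := by
  rcases Fin.eq_castSucc_or_eq_last m with ⟨i, rfl⟩ | rfl
  · simp [shiftBy, Fin.coeSucc_eq_succ]; rfl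
  · simp [shiftBy, ha]; rfl

theorem supportFinset_shiftBy {N : ℕ} {a : F} (ha : a ≠ 0) (v : Fin (N + 1) → F) :
    supportFinset (shiftBy a v) = (supportFinset v).image (· + 1) := by
  ext m
  simp only [mem_supportFinset, mem_image]
  constructor
  · intro h
    refine ⟨m - 1, ?_, sub_add_cancel m 1⟩
    rwa [← shiftBy_add_one_ne_zero_iff ha, sub_add_cancel]
  · rintro ⟨m, hm, rfl⟩
    exact (shiftBy_add_one_ne_zero_iff ha v m).mpr hm

theorem exists_mem_codeOf_supportFinset_eq_image_add {N : ℕ} {a : F} (ha : a ≠ 0) {g : F[X]}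
    {v : Fin (N + 1) → F} (hv : v ∈ codeOf (N + 1) a g) (x : Fin (N + 1)) :
    ∃ w ∈ codeOf (N + 1) a g, supportFinset w = (supportFinset v).image (· + x) := by
  induction x using Fin.induction with
  | zero => exact ⟨v, hv, by simp⟩
  | succ i ih =>
    obtain ⟨w, hw, hwv⟩ := ih
    refine ⟨shiftBy a w, shiftBy_mem_codeOf N.succ_pos a g hw, ?_⟩
    rw [supportFinset_shiftBy ha, hwv, image_image, ← Fin.coeSucc_eq_succ]
    simp only [comp_def, add_assoc]

end Constacyclic

theorem stmt10_general {F : Type*} [Field F] {n k : ℕ} (hn : 0 < n) (hk : 0 < k)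
    (a : F) (ha : a ≠ 0)
    (g : F[X])
    (b : Fin k → Fin n → F)
    (hbmem : ∀ i, b i ∈ codeOf n a g)
    (hbind : LinearIndependent F b)
    (hbspan : ∀ v ∈ codeOf n a g, v ∈ Submodule.span F (Set.range b))
    (hbdisj : ∀ i j : Fin k, i ≠ j → ∀ m : Fin n, b i m = 0 ∨ b j m = 0) :
    ∃ c ∈ codeOf n a g, c ≠ 0 ∧ wt c = n / k := by
  obtain ⟨N, rfl⟩ : ∃ N, n = N + 1 := ⟨n - 1, by omega⟩
  have hblock : ∀ i x, ∃ T : Finset (Fin k),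
      (supportFinset (b i)).image (· + x) = T.biUnion fun j => supportFinset (b j) := by
    intro i x
    obtain ⟨w, hw, hwb⟩ := exists_mem_codeOf_supportFinset_eq_image_add ha (hbmem i) x
    exact hwb ▸ exists_supportFinset_eq_biUnion_of_mem_span hbdisj (hbspan w hw)
  have hcard := card_mul_card_eq_of_image_add_right_eq_biUnion
    (pairwise_disjoint_supportFinset hbdisj) (fun i => supportFinset_nonempty (hbind.ne_zero i))
    hblock ⟨0, hk⟩
  refine ⟨b ⟨0, hk⟩, hbmem _, hbind.ne_zero _, ?_⟩
  simp only [Fintype.card_fin] at hcard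
  rw [wt_eq_card_supportFinset]
  exact (Nat.div_eq_of_eq_mul_right hk hcard.symm).symm

/-- If a constacyclic code of dimension k (k ∣ n) is spanned by a basis of
k codewords with pairwise disjoint supports, then it has a codeword of weight exactly n/k. -/
theorem stmt10 {F : Type*} [Field F] [Fintype F] {n k : ℕ} (hn : 0 < n) (hk : 0 < k)
    (hkdvd : k ∣ n) (a : F) (ha : a ≠ 0)
    (g : F[X]) (hgdvd : g ∣ X ^ n - C a) (hgdeg : g.natDegree = n - k)
    (b : Fin k → Fin n → F)
    (hbmem : ∀ i, b i ∈ codeOf n a g)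
    (hbind : LinearIndependent F b)
    (hbspan : ∀ v ∈ codeOf n a g, v ∈ Submodule.span F (Set.range b))
    (hbdisj : ∀ i j : Fin k, i ≠ j → ∀ m : Fin n, b i m = 0 ∨ b j m = 0) :
    ∃ c ∈ codeOf n a g, c ≠ 0 ∧ wt c = n / k :=
  stmt10_general hn hk a ha g b hbmem hbind hbspan hbdisj
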